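/- arXiv:1910.13044 — 2 statements merged into one kernel-verified Lean document; each statement's English description precedes it below -/
import Mathlib

section
/- Let p be a prime, k ≥ 1, and G_{p,k} = C_{p^∞} × C_k × 𝕋, where C_{p^∞} is the Prüfer p-group with the discrete topology, C_k is the cyclic group of order k with the discrete topology, and 𝕋 is the circle group. Then every closed subgroup of G_{p,k} that is not discrete is of the form D × 𝕋 for some subgroup D of C_{p^∞} × C_k. Moreover, the set of such subgroups is closed in the Chabauty space C(G_{p,k}) and is homeomorphic to C(C_{p^∞} × C_k) via the map sending a subgroup D of C_{p^∞} × C_k to its preimage D × 𝕋 under the projection π : G_{p,k} → C_{p^∞} × C_k. -/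
/-- The subgroup `C_n` of `n`-th roots of unity in the circle group `𝕋`. -/
noncomputable def circleRoots (n : ℕ) : Subgroup Circle where
  carrier := {z | z ^ n = 1}
  one_mem' := one_pow n
  mul_mem' := by
    intro a b ha hb
    simp only [Set.mem_setOf_eq] at *
    rw [mul_pow, ha, hb, mul_one]
  inv_mem' := by
    intro a ha
    simp only [Set.mem_setOf_eq] at *
    rw [inv_pow, ha, inv_one]

/-- The subgroup of all `p`-power roots of unity in the circle group `𝕋`. -/
noncomputable def pruferSubgroup (p : ℕ) : Subgroup Circle where
  carrier := {z | ∃ ℓ : ℕ, z ^ p ^ ℓ = 1}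
  one_mem' := ⟨0, one_pow _⟩
  mul_mem' := by
    rintro a b ⟨la, ha⟩ ⟨lb, hb⟩
    refine ⟨la + lb, ?_⟩
    rw [mul_pow, pow_add, pow_mul, ha, one_pow, mul_comm (p ^ la), pow_mul, hb, one_pow,
      one_mul]
  inv_mem' := by
    rintro a ⟨l, h⟩
    exact ⟨l, by rw [inv_pow, h, inv_one]⟩

/-- The Prüfer `p`-group `C_{p^∞}`: the group of all `p`-power roots of unity in `𝕋`,
endowed with the *discrete* topology. -/
def Prufer (p : ℕ) : Type := ↥(pruferSubgroup p)

noncomputable instance (p : ℕ) : CommGroup (Prufer p) := inferInstanceAs (CommGroup ↥(pruferSubgroup p))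

instance (p : ℕ) : TopologicalSpace (Prufer p) := ⊥

instance (p : ℕ) : DiscreteTopology (Prufer p) := ⟨rfl⟩

instance (p : ℕ) : IsTopologicalGroup (Prufer p) where
  continuous_mul := continuous_of_discreteTopology
  continuous_inv := continuous_of_discreteTopology

/-- The Chabauty space of a topological group `G`: the set of closed subgroups of `G`. -/
def ChabautySpace (G : Type*) [Group G] [TopologicalSpace G] : Type _ :=
  {H : Subgroup G // IsClosed (H : Set G)}

/-- The Chabauty topology on the space of closed subgroups, generated by the sets
`O_K = {H | H ∩ K = ∅}` for `K` compact and `O'_U = {H | H ∩ U ≠ ∅}` for `U` open. -/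
instance ChabautySpace.instTopologicalSpace (G : Type*) [Group G] [TopologicalSpace G] :
    TopologicalSpace (ChabautySpace G) :=
  TopologicalSpace.generateFrom
    ({S | ∃ K : Set G, IsCompact K ∧ S = {H : ChabautySpace G | (H.1 : Set G) ∩ K = ∅}} ∪
     {S | ∃ U : Set G, IsOpen U ∧ S = {H : ChabautySpace G | ((H.1 : Set G) ∩ U).Nonempty}})

/-!
The kernel of the projection `π : C_{p^∞} × C_k × 𝕋 → C_{p^∞} × C_k` is the circle factor, and the
target of `π` is discrete. A closed subgroup `H` meets the circle in a closed subgroup of `𝕋`, which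
is either all of `𝕋` or finite. In the finite case `H ∩ ker π` is finite and `ker π` is open, so `H`
is discrete; otherwise `ker π ≤ H` and `H = π⁻¹(π(H))`. Subgroups containing a fixed subgroup form
a Chabauty-closed set, since `{H | g ∈ H}` is the complement of the basic open set for `K = {g}`.
Since `π` is continuous, open, proper and surjective, `D ↦ π⁻¹(D)` and `H ↦ π(H)` are mutually
inverse and both pull basic open sets back to basic open sets.
-/

open Set

lemma Circle.eq_top_or_finite_of_isClosed {S : Subgroup Circle} (hS : IsClosed (S : Set Circle)) :
    S = ⊤ ∨ (S : Set Circle).Finite := by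
  set T : AddSubgroup ℝ := (Subgroup.toAddSubgroup S).comap Circle.expHom
  have hT : (T : Set ℝ) = Circle.exp ⁻¹' S := rfl
  have hST : (S : Set Circle) = Circle.exp '' T := by
    rw [hT, image_preimage_eq _ Circle.exp_surjective]
  rcases T.dense_or_cyclic with hdense | ⟨a, ha⟩
  · left
    have hTuniv : (T : Set ℝ) = univ := by
      have hTclosed : IsClosed (T : Set ℝ) := hS.preimage Circle.exp.continuous
      rw [← hdense.closure_eq, hTclosed.closure_eq]
    rw [← SetLike.coe_set_eq, hST, hTuniv, image_univ, Circle.exp_surjective.range_eq]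
    rfl
  · right
    rw [← AddSubgroup.zmultiples_eq_closure] at ha
    have h2pi : 2 * Real.pi ∈ AddSubgroup.zmultiples a := by
      rw [← ha, ← SetLike.mem_coe, hT, mem_preimage, Circle.exp_two_pi]
      exact S.one_mem
    obtain ⟨n, hn⟩ := AddSubgroup.mem_zmultiples_iff.1 h2pi
    have hfin : IsOfFinOrder (Circle.exp a) := by
      refine isOfFinOrder_iff_zpow_eq_one.2 ⟨n, ?_, ?_⟩
      · rintro rfl
        simp [Real.pi_ne_zero] at hn
      · rw [← Circle.exp_zsmul, hn, Circle.exp_two_pi]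
    refine hfin.finite_zpowers.subset ?_
    rw [hST, ha]
    rintro _ ⟨x, ⟨m, rfl⟩, rfl⟩
    exact ⟨m, (Circle.exp_zsmul a m).symm⟩

lemma finite_circleRoots {k : ℕ} (hk : 0 < k) : Finite (circleRoots k) := by
  have hroot (z : circleRoots k) : (z : ℂ) ∈ Polynomial.nthRootsFinset k (1 : ℂ) := by
    rw [Polynomial.mem_nthRootsFinset hk, ← Circle.coe_pow, Circle.coe_eq_one]
    exact z.2
  refine Finite.of_injective (fun z => (⟨z, hroot z⟩ : Polynomial.nthRootsFinset k (1 : ℂ))) ?_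
  intro z w h
  simp only [Subtype.mk.injEq] at h
  exact Subtype.ext (Circle.coe_injective h)

section Discreteness

variable {G Q : Type*} [Group G] [TopologicalSpace G] [IsTopologicalGroup G] [T1Space G]
  [Group Q] [TopologicalSpace Q] [DiscreteTopology Q] {π : G →* Q}

lemma Subgroup.discreteTopology_of_finite_inf_ker (hπ : Continuous π) {H : Subgroup G}
    (hfin : ((H ⊓ π.ker : Subgroup G) : Set G).Finite) : DiscreteTopology H := by
  set U : Set G := π ⁻¹' {1} ∩ ((H ⊓ π.ker : Subgroup G) \ {1} : Set G)ᶜ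
  have hU : IsOpen U :=
    ((isOpen_discrete _).preimage hπ).inter (hfin.sdiff.isClosed.isOpen_compl)
  have hone : ({1} : Set H) = (↑) ⁻¹' U := by
    ext ⟨x, hxH⟩
    simp only [mem_singleton_iff, mem_preimage, U, mem_inter_iff, mem_compl_iff, mem_sdiff,
      SetLike.mem_coe, Subgroup.mem_inf, MonoidHom.mem_ker, Subgroup.mk_eq_one]
    constructor
    · rintro rfl
      simp
    · rintro ⟨hx, hx'⟩
      by_contra hne
      exact hx' ⟨⟨hxH, hx⟩, hne⟩
  exact discreteTopology_of_isOpen_singleton_one (hone ▸ hU.preimage continuous_subtype_val)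

lemma Subgroup.ker_le_of_not_discreteTopology (hπ : Continuous π)
    {ι : Circle →* G} (hι : Continuous ι) (hker : π.ker ≤ ι.range) {H : Subgroup G}
    (hH : IsClosed (H : Set G)) (hH_nd : ¬ DiscreteTopology H) : π.ker ≤ H := by
  rcases Circle.eq_top_or_finite_of_isClosed (hH.preimage hι) (S := H.comap ι) with htop | hfin
  · refine hker.trans ?_
    rw [MonoidHom.range_eq_map, Subgroup.map_le_iff_le_comap, htop]
  · refine absurd (H.discreteTopology_of_finite_inf_ker hπ ((hfin.image ι).subset ?_)) hH_nd
    rintro x ⟨hxH, hxker⟩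
    obtain ⟨t, rfl⟩ := hker hxker
    exact ⟨t, hxH, rfl⟩

end Discreteness

namespace ChabautySpace

variable {G Q : Type*} [Group G] [TopologicalSpace G] [Group Q]

lemma isOpen_setOf_inter_eq_empty {K : Set G} (hK : IsCompact K) :
    IsOpen {H : ChabautySpace G | (H.1 : Set G) ∩ K = ∅} :=
  TopologicalSpace.isOpen_generateFrom_of_mem (Or.inl ⟨K, hK, rfl⟩)

lemma isOpen_setOf_inter_nonempty {U : Set G} (hU : IsOpen U) :
    IsOpen {H : ChabautySpace G | ((H.1 : Set G) ∩ U).Nonempty} :=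
  TopologicalSpace.isOpen_generateFrom_of_mem (Or.inr ⟨U, hU, rfl⟩)

lemma continuous_of_isOpen_preimage {X : Type*} [TopologicalSpace X] {f : X → ChabautySpace G}
    (hK : ∀ K : Set G, IsCompact K → IsOpen (f ⁻¹' {H | (H.1 : Set G) ∩ K = ∅}))
    (hU : ∀ U : Set G, IsOpen U → IsOpen (f ⁻¹' {H | ((H.1 : Set G) ∩ U).Nonempty})) :
    Continuous f := by
  refine continuous_generateFrom_iff.2 ?_
  rintro _ (⟨K, hK', rfl⟩ | ⟨U, hU', rfl⟩)
  exacts [hK K hK', hU U hU']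

lemma isClosed_setOf_mem (g : G) : IsClosed {H : ChabautySpace G | g ∈ H.1} := by
  have hcompl : {H : ChabautySpace G | g ∈ H.1} = {H | (H.1 : Set G) ∩ {g} = ∅}ᶜ := by
    ext H
    simp [inter_singleton_eq_empty]
  rw [hcompl]
  exact (isOpen_setOf_inter_eq_empty isCompact_singleton).isClosed_compl

lemma isClosed_setOf_le (N : Subgroup G) : IsClosed {H : ChabautySpace G | N ≤ H.1} := by
  simp only [SetLike.le_def, ofPred_forall]
  exact isClosed_biInter fun g _ => isClosed_setOf_mem g

lemma setOf_exists_eq_comap (f : G →* Q) :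
    {H : ChabautySpace G | ∃ D : Subgroup Q, H.1 = D.comap f} = {H | f.ker ≤ H.1} := by
  ext H
  constructor
  · rintro ⟨D, hD⟩
    change f.ker ≤ H.1
    exact hD ▸ D.ker_le_comap f
  · intro hker
    exact ⟨H.1.map f, (Subgroup.comap_map_eq_self hker).symm⟩

lemma isClosed_setOf_exists_eq_comap (f : G →* Q) :
    IsClosed {H : ChabautySpace G | ∃ D : Subgroup Q, H.1 = D.comap f} :=
  setOf_exists_eq_comap f ▸ isClosed_setOf_le f.ker

variable [TopologicalSpace Q]

def comap (f : G →* Q) (hf : Continuous f) (D : ChabautySpace Q) : ChabautySpace G :=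
  ⟨D.1.comap f, D.2.preimage hf⟩

def map (f : G →* Q) (hf : IsClosedMap f) (H : ChabautySpace G) : ChabautySpace Q :=
  ⟨H.1.map f, hf _ H.2⟩

lemma continuous_comap {f : G →* Q} (hf : Continuous f) (hfo : IsOpenMap f) :
    Continuous (comap f hf) := by
  refine continuous_of_isOpen_preimage (fun K hK => ?_) (fun U hU => ?_)
  · convert isOpen_setOf_inter_eq_empty (hK.image hf) using 1
    ext D
    change f ⁻¹' D.1 ∩ K = ∅ ↔ (D.1 : Set Q) ∩ f '' K = ∅
    rw [← not_nonempty_iff_eq_empty, ← not_nonempty_iff_eq_empty, inter_comm _ (f '' K),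
      image_inter_nonempty_iff, inter_comm K]
  · convert isOpen_setOf_inter_nonempty (hfo U hU) using 1
    ext D
    change (f ⁻¹' D.1 ∩ U).Nonempty ↔ ((D.1 : Set Q) ∩ f '' U).Nonempty
    rw [inter_comm _ (f '' U), image_inter_nonempty_iff, inter_comm U]

lemma continuous_map {f : G →* Q} (hf : IsProperMap f) : Continuous (map f hf.isClosedMap) := by
  refine continuous_of_isOpen_preimage (fun K hK => ?_) (fun U hU => ?_)
  · convert isOpen_setOf_inter_eq_empty (hf.isCompact_preimage hK) using 1
    ext H
    change f '' H.1 ∩ K = ∅ ↔ (H.1 : Set G) ∩ f ⁻¹' K = ∅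
    rw [← not_nonempty_iff_eq_empty, ← not_nonempty_iff_eq_empty, image_inter_nonempty_iff]
  · convert isOpen_setOf_inter_nonempty (hU.preimage hf.continuous) using 1
    ext H
    exact image_inter_nonempty_iff

def comapHomeomorph {f : G →* Q} (hf : IsProperMap f) (hfo : IsOpenMap f)
    (hfs : Function.Surjective f) :
    ChabautySpace Q ≃ₜ {H : ChabautySpace G | ∃ D : Subgroup Q, H.1 = D.comap f} where
  toFun D := ⟨comap f hf.continuous D, D.1, rfl⟩
  invFun H := map f hf.isClosedMap H
  left_inv D := Subtype.ext (Subgroup.map_comap_eq_self_of_surjective hfs D.1)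
  right_inv := by
    rintro ⟨H, D, hD⟩
    refine Subtype.ext (Subtype.ext ?_)
    change (H.1.map f).comap f = H.1
    rw [hD, Subgroup.map_comap_eq_self_of_surjective hfs]
  continuous_toFun := (continuous_comap hf.continuous hfo).subtype_mk _
  continuous_invFun := (continuous_map hf).comp continuous_subtype_val

end ChabautySpace

theorem chabauty_one_dimensional_subgroups_general (p k : ℕ) (hk : 1 ≤ k) :
    (∀ H : Subgroup (Prufer p × ↥(circleRoots k) × Circle),
      IsClosed (H : Set (Prufer p × ↥(circleRoots k) × Circle)) → ¬ DiscreteTopology H →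
        ∃ D : Subgroup (Prufer p × ↥(circleRoots k)),
          H = D.comap ((MonoidHom.id (Prufer p)).prodMap (MonoidHom.fst _ Circle))) ∧
    IsClosed {H : ChabautySpace (Prufer p × ↥(circleRoots k) × Circle) |
      ∃ D : Subgroup (Prufer p × ↥(circleRoots k)),
        H.1 = D.comap ((MonoidHom.id (Prufer p)).prodMap (MonoidHom.fst _ Circle))} ∧
    ∃ e : ChabautySpace (Prufer p × ↥(circleRoots k)) ≃ₜ
        {H : ChabautySpace (Prufer p × ↥(circleRoots k) × Circle) |
          ∃ D : Subgroup (Prufer p × ↥(circleRoots k)),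
            H.1 = D.comap ((MonoidHom.id (Prufer p)).prodMap (MonoidHom.fst _ Circle))},
      ∀ D : ChabautySpace (Prufer p × ↥(circleRoots k)),
        ((e D : ChabautySpace (Prufer p × ↥(circleRoots k) × Circle)).1 =
          D.1.comap ((MonoidHom.id (Prufer p)).prodMap (MonoidHom.fst _ Circle))) := by
  set π := (MonoidHom.id (Prufer p)).prodMap (MonoidHom.fst (circleRoots k) Circle)
  have hπ_proper : IsProperMap π := isProperMap_id.prodMap isProperMap_fst_of_compactSpace
  have hπ_open : IsOpenMap π := IsOpenMap.id.prodMap isOpenMap_fst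
  have hπ_surj : Function.Surjective π := fun q => ⟨(q.1, q.2, 1), rfl⟩
  refine ⟨fun H hH hH_nd => ?_, ChabautySpace.isClosed_setOf_exists_eq_comap π,
    ChabautySpace.comapHomeomorph hπ_proper hπ_open hπ_surj, fun D => rfl⟩
  have : Finite (circleRoots k) := finite_circleRoots hk
  set ι := (MonoidHom.inr (Prufer p) _).comp (MonoidHom.inr (circleRoots k) Circle)
  have hι : Continuous ι := continuous_const.prodMk (continuous_const.prodMk continuous_id)
  have hker : π.ker ≤ ι.range := by
    rintro ⟨a, b, t⟩ hx
    obtain ⟨rfl, rfl⟩ := Prod.mk_eq_one.1 (show (a, b) = 1 from hx)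
    exact ⟨t, rfl⟩
  exact ⟨H.map π, (Subgroup.comap_map_eq_self
    (Subgroup.ker_le_of_not_discreteTopology hπ_proper.continuous hι hker hH hH_nd)).symm⟩

/-- In `G_{p,k} = C_{p^∞} × C_k × 𝕋`, every non-discrete closed subgroup is of the form
`D × 𝕋` (the preimage of a subgroup `D ≤ C_{p^∞} × C_k` under the projection
`π : G_{p,k} → C_{p^∞} × C_k`); the set of such subgroups is closed in `C(G_{p,k})` and is
homeomorphic to `C(C_{p^∞} × C_k)` via `D ↦ π⁻¹(D)`. -/
theorem chabauty_one_dimensional_subgroups (p k : ℕ) (hp : p.Prime) (hk : 1 ≤ k) :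
    (∀ H : Subgroup (Prufer p × ↥(circleRoots k) × Circle),
      IsClosed (H : Set (Prufer p × ↥(circleRoots k) × Circle)) → ¬ DiscreteTopology H →
        ∃ D : Subgroup (Prufer p × ↥(circleRoots k)),
          H = D.comap ((MonoidHom.id (Prufer p)).prodMap (MonoidHom.fst _ Circle))) ∧
    IsClosed {H : ChabautySpace (Prufer p × ↥(circleRoots k) × Circle) |
      ∃ D : Subgroup (Prufer p × ↥(circleRoots k)),
        H.1 = D.comap ((MonoidHom.id (Prufer p)).prodMap (MonoidHom.fst _ Circle))} ∧
    ∃ e : ChabautySpace (Prufer p × ↥(circleRoots k)) ≃ₜ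
        {H : ChabautySpace (Prufer p × ↥(circleRoots k) × Circle) |
          ∃ D : Subgroup (Prufer p × ↥(circleRoots k)),
            H.1 = D.comap ((MonoidHom.id (Prufer p)).prodMap (MonoidHom.fst _ Circle))},
      ∀ D : ChabautySpace (Prufer p × ↥(circleRoots k)),
        ((e D : ChabautySpace (Prufer p × ↥(circleRoots k) × Circle)).1 =
          D.1.comap ((MonoidHom.id (Prufer p)).prodMap (MonoidHom.fst _ Circle))) :=
  chabauty_one_dimensional_subgroups_general p k hk
end

section
/- Let p be a prime, k ≥ 1, and G_{p,k} = C_{p^∞} × C_k × 𝕋. Let C^dis denote the set of infinite discrete closed subgroups of G_{p,k}. Then the closure of C^dis in the Chabauty space C(G_{p,k}) is the union of C^dis with the d(k) subgroups C_{p^∞} × C_d × 𝕋, where d ranges over the positive divisors of k. -/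
/-!
An infinite discrete closed subgroup `D` of `G_{p,k}` has infinite image in `C_{p^∞}`:
otherwise `D` would lie in the compact set `F × C_k × 𝕋` with `F` finite. Every infinite
subgroup of `C_{p^∞}` is everything, so `D` meets each compact set `{a} × C_k × 𝕋`; since
meeting a compact set is a closed condition in the Chabauty topology, every limit `H` of such
groups also projects onto `C_{p^∞}`, and in particular is infinite. If `H` is not discrete, its
slice `H ∩ 𝕋` is infinite and closed, hence all of `𝕋`. Then `H` contains `(a ^ k, 1, 1)` for
every `a`, and the `k`-th powers form an infinite subgroup of `C_{p^∞}`, so `C_{p^∞} ≤ H` and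
`H = C_{p^∞} × C_d × 𝕋` with `C_d = H ∩ C_k`. Conversely, `C_{p^∞} × C_d × C_{m!}` converges
to `C_{p^∞} × C_d × 𝕋` because torsion points are dense in `𝕋`.
-/

open Set Subgroup Filter Topology

section CircleRoots

lemma mem_circleRoots {n : ℕ} {z : Circle} : z ∈ circleRoots n ↔ z ^ n = 1 := Iff.rfl

lemma natCard_circleRoots (n : ℕ) [NeZero n] : Nat.card (circleRoots n) = n := by
  refine (Nat.card_congr (toUnits.toEquiv.subtypeEquiv fun z => ?_)).trans
    (HasEnoughRootsOfUnity.natCard_rootsOfUnity Circle n)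
  simp [mem_circleRoots, mem_rootsOfUnity, ← Units.val_inj]

instance finite_circleRoots_s19 {n : ℕ} [NeZero n] : Finite (circleRoots n) :=
  Nat.finite_of_card_ne_zero ((natCard_circleRoots n).trans_ne (NeZero.ne n))

lemma isClosed_circleRoots (n : ℕ) : IsClosed (circleRoots n : Set Circle) :=
  isClosed_eq (continuous_pow n) continuous_const

lemma circleRoots_le_of_dvd {m n : ℕ} (h : m ∣ n) : circleRoots m ≤ circleRoots n := by
  rintro z (hz : z ^ m = 1)
  obtain ⟨c, rfl⟩ := h
  rw [mem_circleRoots, pow_mul, hz, one_pow]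

lemma Subgroup.eq_circleRoots_natCard (S : Subgroup Circle) [Finite S] :
    S = circleRoots (Nat.card S) := by
  have hle : S ≤ circleRoots (Nat.card S) := fun z hz =>
    congrArg Subtype.val (pow_card_eq_one' : (⟨z, hz⟩ : S) ^ Nat.card S = 1)
  have : NeZero (Nat.card S) := ⟨Nat.card_pos.ne'⟩
  exact eq_of_le_of_card_ge hle (natCard_circleRoots _).le

lemma zpowers_eq_circleRoots_orderOf {z : Circle} (hz : IsOfFinOrder z) :
    zpowers z = circleRoots (orderOf z) := by
  have : Finite (zpowers z) := (finite_zpowers.mpr hz).to_subtype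
  rw [(zpowers z).eq_circleRoots_natCard, Nat.card_zpowers]

lemma Subgroup.exists_dvd_eq_comap_circleRoots {k : ℕ} [NeZero k]
    (S : Subgroup (circleRoots k)) :
    ∃ d, 0 < d ∧ d ∣ k ∧ S = (circleRoots d).comap (circleRoots k).subtype := by
  set S' := S.map (circleRoots k).subtype
  have : Finite S' := Finite.Set.finite_image (S : Set (circleRoots k)) _
  have hS' : S' = circleRoots (Nat.card S') := S'.eq_circleRoots_natCard
  refine ⟨Nat.card S', Nat.card_pos, ?_, ?_⟩
  · simpa only [natCard_circleRoots k] using card_dvd_of_le ((circleRoots k).map_subtype_le S)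
  · rw [← hS', comap_map_eq_self_of_injective (circleRoots k).subtype_injective]

lemma Subgroup.infinite_of_forall_exists_circleRoots_le {S : Subgroup Circle}
    (h : ∀ n, ∃ m, n < m ∧ circleRoots m ≤ S) : (S : Set Circle).Infinite := by
  intro hfin
  have : Finite S := hfin.to_subtype
  obtain ⟨m, hnm, hle⟩ := h (Nat.card S)
  have : NeZero m := ⟨by omega⟩
  have hcard := card_le_of_le hle
  rw [natCard_circleRoots m] at hcard
  omega

end CircleRoots

section CircleSubgroups

lemma Circle.subgroup_eq_top_of_isClosed_of_infinite {S : Subgroup Circle}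
    (hc : IsClosed (S : Set Circle)) (hinf : (S : Set Circle).Infinite) : S = ⊤ := by
  let S' : AddSubgroup ℝ := S.toAddSubgroup.comap Circle.expHom
  have mem_S' {r : ℝ} : r ∈ S' ↔ Circle.exp r ∈ S := Iff.rfl
  rcases S'.dense_or_cyclic with hd | ⟨a, ha⟩
  · have hS : Dense (S : Set Circle) :=
      (Circle.exp_surjective.denseRange.dense_image Circle.exp.continuous hd).mono
        (image_subset_iff.mpr fun _ => mem_S'.mp)
    exact SetLike.coe_injective (hc.closure_eq.symm.trans hS.closure_eq)
  · have hzpowers : ∀ r ∈ S', Circle.exp r ∈ zpowers (Circle.exp a) := fun r hr => by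
      obtain ⟨j, rfl⟩ := AddSubgroup.mem_closure_singleton.mp (ha ▸ hr)
      exact ⟨j, (Circle.exp_zsmul a j).symm⟩
    -- `2π ∈ S'` is a nonzero multiple of the generator `a`.
    have hfin : IsOfFinOrder (Circle.exp a) := by
      obtain ⟨n, hn⟩ := AddSubgroup.mem_closure_singleton.mp (ha ▸ mem_S'.mpr
        (by rw [Circle.exp_two_pi]; exact S.one_mem) : 2 * Real.pi ∈ AddSubgroup.closure {a})
      refine isOfFinOrder_iff_zpow_eq_one.mpr ⟨n, ?_, ?_⟩
      · rintro rfl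
        simp [Real.pi_ne_zero] at hn
      · rw [← Circle.exp_zsmul, hn, Circle.exp_two_pi]
    refine absurd ((finite_zpowers.mpr hfin).subset fun z hz => ?_) hinf
    obtain ⟨r, rfl⟩ := Circle.exp_surjective z
    exact hzpowers r hz

lemma Circle.dense_torsion : Dense (CommGroup.torsion Circle : Set Circle) := by
  have hinf : ((CommGroup.torsion Circle).topologicalClosure : Set Circle).Infinite :=
    infinite_of_forall_exists_circleRoots_le fun n =>
      ⟨n + 1, n.lt_succ_self, fun z hz => subset_closure
        (isOfFinOrder_iff_pow_eq_one.mpr ⟨n + 1, n.succ_pos, hz⟩)⟩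
  rw [dense_iff_closure_eq, ← topologicalClosure_coe,
    subgroup_eq_top_of_isClosed_of_infinite (isClosed_topologicalClosure _) hinf, coe_top]

end CircleSubgroups

section Prufer

variable {p : ℕ}

lemma circleRoots_pow_le_pruferSubgroup (ℓ : ℕ) : circleRoots (p ^ ℓ) ≤ pruferSubgroup p :=
  fun _ hz => ⟨ℓ, hz⟩

lemma pruferSubgroup_infinite (hp : 1 < p) : (pruferSubgroup p : Set Circle).Infinite :=
  infinite_of_forall_exists_circleRoots_le fun n =>
    ⟨p ^ n, Nat.lt_pow_self hp, circleRoots_pow_le_pruferSubgroup n⟩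

lemma pruferSubgroup_le_of_infinite (hp : p.Prime) {S : Subgroup Circle}
    (hSp : S ≤ pruferSubgroup p) (hS : (S : Set Circle).Infinite) : pruferSubgroup p ≤ S := by
  rintro x ⟨ℓ, hx⟩
  obtain ⟨y, hyS, hy⟩ : ∃ y ∈ S, y ∉ circleRoots (p ^ ℓ) := by
    by_contra! h
    have : NeZero (p ^ ℓ) := ⟨(pow_pos hp.pos ℓ).ne'⟩
    exact hS ((Set.finite_coe_iff.mp finite_circleRoots_s19).subset h)
  obtain ⟨L, hyL⟩ := hSp hyS
  obtain ⟨m, -, hm⟩ := (Nat.dvd_prime_pow hp).mp (orderOf_dvd_of_pow_eq_one hyL)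
  have hℓm : ℓ ≤ m := by
    by_contra! h
    exact hy (orderOf_dvd_iff_pow_eq_one.mp (hm ▸ pow_dvd_pow p h.le))
  have hxy : x ∈ zpowers y := by
    rw [zpowers_eq_circleRoots_orderOf (isOfFinOrder_iff_pow_eq_one.mpr
      ⟨_, pow_pos hp.pos L, hyL⟩), hm]
    exact circleRoots_le_of_dvd (pow_dvd_pow p hℓm) hx
  exact zpowers_le.mpr hyS hxy

namespace Prufer

variable (p) in
noncomputable def toCircle : Prufer p →* Circle := (pruferSubgroup p).subtype

lemma toCircle_injective : Function.Injective (toCircle p) := Subtype.val_injective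

lemma infinite (hp : 1 < p) : Infinite (Prufer p) := (pruferSubgroup_infinite hp).to_subtype

lemma eq_top_of_infinite (hp : p.Prime) {S : Subgroup (Prufer p)}
    (hS : (S : Set (Prufer p)).Infinite) : S = ⊤ := by
  have hle : pruferSubgroup p ≤ S.map (toCircle p) :=
    pruferSubgroup_le_of_infinite hp ((pruferSubgroup p).map_subtype_le S)
      (by rw [coe_map]; exact hS.image toCircle_injective.injOn)
  refine eq_top_iff.mpr fun x _ => ?_
  obtain ⟨y, hy, hyx⟩ := hle x.2
  exact toCircle_injective hyx ▸ hy

lemma infinite_range_powMonoidHom (hp : 1 < p) (k : ℕ) [NeZero k] :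
    (((powMonoidHom k).range : Subgroup (Prufer p)) : Set (Prufer p)).Infinite := by
  have hker : Finite (powMonoidHom k : Prufer p →* Prufer p).ker := by
    refine Finite.of_injective (β := circleRoots k) (fun x => ⟨toCircle p x, ?_⟩)
      fun x y h => ?_
    · rw [mem_circleRoots, ← map_pow, show (x : Prufer p) ^ k = 1 from x.2, map_one]
    · exact Subtype.ext (toCircle_injective (congrArg (Subtype.val : circleRoots k → Circle) h))
  intro hfin
  have : Finite (powMonoidHom k : Prufer p →* Prufer p).range := hfin.to_subtype
  exact (infinite hp).not_finite
    ((MonoidHom.finite_iff_finite_ker_range (powMonoidHom k)).mpr ⟨hker, this⟩)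

end Prufer

end Prufer

section Topology

lemma Set.Infinite.image_fst_of_isClosed_of_isDiscrete {A B : Type*} [TopologicalSpace A]
    [TopologicalSpace B] [CompactSpace B] {s : Set (A × B)} (hs : s.Infinite)
    (hc : IsClosed s) (hd : IsDiscrete s) : (Prod.fst '' s).Infinite := fun hfin =>
  hs (((hfin.isCompact.prod isCompact_univ).of_isClosed_subset hc
    fun x hx => ⟨⟨x, hx, rfl⟩, trivial⟩).finite hd)

lemma Subgroup.discreteTopology_of_finite_inter {G : Type*} [Group G] [TopologicalSpace G]
    [IsTopologicalGroup G] [T1Space G] (H : Subgroup G) {U : Set G} (hU : U ∈ 𝓝 1)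
    (hfin : (U ∩ H).Finite) : DiscreteTopology H := by
  refine discreteTopology_of_isOpen_singleton_one
    (isOpen_singleton_of_finite_mem_nhds 1 (s := Subtype.val ⁻¹' U) ?_ ?_)
  · exact continuous_subtype_val.continuousAt.preimage_mem_nhds hU
  · exact (hfin.preimage Subtype.val_injective.injOn).subset fun x hx => ⟨hx, x.2⟩

lemma Prufer.image_fst_eq_univ_of_discreteTopology {p : ℕ} {B : Type*} [Group B]
    [TopologicalSpace B] [CompactSpace B] (hp : p.Prime) {D : Subgroup (Prufer p × B)}
    (hc : IsClosed (D : Set (Prufer p × B))) (hinf : (D : Set (Prufer p × B)).Infinite)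
    (hd : DiscreteTopology D) : Prod.fst '' (D : Set (Prufer p × B)) = univ := by
  have h := eq_top_of_infinite hp (S := D.map (MonoidHom.fst _ _)) (by
    rw [coe_map, MonoidHom.coe_fst]
    exact hinf.image_fst_of_isClosed_of_isDiscrete hc (isDiscrete_iff_discreteTopology.mpr hd))
  rw [← MonoidHom.coe_fst, ← coe_map, h, coe_top]

end Topology

namespace ChabautySpace

lemma isClosed_setOf_inter_nonempty {G : Type*} [Group G] [TopologicalSpace G] {K : Set G}
    (hK : IsCompact K) : IsClosed {H : ChabautySpace G | ((H.1 : Set G) ∩ K).Nonempty} := by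
  rw [← isOpen_compl_iff]
  simpa only [compl_ofPred, not_nonempty_iff_eq_empty] using
    TopologicalSpace.isOpen_generateFrom_of_mem (Or.inl ⟨K, hK, rfl⟩)

lemma image_fst_eq_univ_of_mem_closure {A B : Type*} [Group A] [Group B] [TopologicalSpace A]
    [TopologicalSpace B] [CompactSpace B] {S : Set (ChabautySpace (A × B))}
    (hS : ∀ D ∈ S, Prod.fst '' (D.1 : Set (A × B)) = univ) {H : ChabautySpace (A × B)}
    (hH : H ∈ closure S) : Prod.fst '' (H.1 : Set (A × B)) = univ := by
  refine eq_univ_of_forall fun a => ?_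
  have hmeet :
      S ⊆ {D : ChabautySpace (A × B) | ((D.1 : Set (A × B)) ∩ {a} ×ˢ univ).Nonempty} :=
    fun D hD => by
      obtain ⟨x, hx, rfl⟩ := hS D hD ▸ mem_univ a
      exact ⟨x, hx, rfl, trivial⟩
  obtain ⟨x, hx, rfl, -⟩ := closure_minimal hmeet
    (isClosed_setOf_inter_nonempty (isCompact_singleton.prod isCompact_univ)) hH
  exact ⟨x, hx, rfl⟩

lemma tendsto_nhds_iff {G : Type*} [Group G] [TopologicalSpace G] {α : Type*} {l : Filter α}
    {f : α → ChabautySpace G} {H : ChabautySpace G} :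
    Tendsto f l (𝓝 H) ↔
      (∀ K, IsCompact K → (H.1 : Set G) ∩ K = ∅ →
        ∀ᶠ a in l, ((f a).1 : Set G) ∩ K = ∅) ∧
      ∀ U, IsOpen U → ((H.1 : Set G) ∩ U).Nonempty →
        ∀ᶠ a in l, (((f a).1 : Set G) ∩ U).Nonempty := by
  refine TopologicalSpace.tendsto_nhds_generateFrom_iff.trans ⟨fun h => ⟨?_, ?_⟩, ?_⟩
  · exact fun K hK => h _ (Or.inl ⟨K, hK, rfl⟩)
  · exact fun U hU => h _ (Or.inr ⟨U, hU, rfl⟩)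
  · rintro ⟨hK, hU⟩ s (⟨K, hKc, rfl⟩ | ⟨U, hUo, rfl⟩)
    exacts [hK K hKc, hU U hUo]

end ChabautySpace

namespace Subgroup

variable {A B C : Type*} [Group A] [Group B] [Group C]

def slice₁ (H : Subgroup (A × B × C)) : Subgroup A := H.comap (MonoidHom.inl A (B × C))

def slice₂ (H : Subgroup (A × B × C)) : Subgroup B :=
  H.comap ((MonoidHom.inr A (B × C)).comp (MonoidHom.inl B C))

def slice₃ (H : Subgroup (A × B × C)) : Subgroup C :=
  H.comap ((MonoidHom.inr A (B × C)).comp (MonoidHom.inr B C))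

variable {H : Subgroup (A × B × C)}

lemma mem_slice₁ {a : A} : a ∈ H.slice₁ ↔ (a, 1, 1) ∈ H := Iff.rfl

lemma mem_slice₂ {b : B} : b ∈ H.slice₂ ↔ (1, b, 1) ∈ H := Iff.rfl

lemma mem_slice₃ {c : C} : c ∈ H.slice₃ ↔ (1, 1, c) ∈ H := Iff.rfl

lemma eq_prod_slice₂ (h₁ : H.slice₁ = ⊤) (h₃ : H.slice₃ = ⊤) :
    H = (⊤ : Subgroup A).prod (H.slice₂.prod ⊤) := by
  ext x
  have ha : x.1 ∈ H.slice₁ := h₁ ▸ mem_top _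
  have hc : x.2.2 ∈ H.slice₃ := h₃ ▸ mem_top _
  simp only [mem_prod, mem_top, true_and, and_true, mem_slice₂]
  constructor
  · intro hx
    have hb : (1, x.2.1, 1) = (x.1, 1, 1)⁻¹ * x * (1, 1, x.2.2)⁻¹ := by ext <;> simp
    rw [hb]
    exact H.mul_mem (H.mul_mem (H.inv_mem ha) hx) (H.inv_mem hc)
  · intro hb
    have hx : x = (x.1, 1, 1) * (1, x.2.1, 1) * (1, 1, x.2.2) := by ext <;> simp
    rw [hx]
    exact H.mul_mem (H.mul_mem ha hb) hc

variable [TopologicalSpace A] [TopologicalSpace B] [TopologicalSpace C]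

lemma isClosed_slice₃ (hH : IsClosed (H : Set (A × B × C))) : IsClosed (H.slice₃ : Set C) :=
  hH.preimage (continuous_const.prodMk (continuous_const.prodMk continuous_id))

lemma discreteTopology_of_finite_slice₃ [DiscreteTopology A] [DiscreteTopology B]
    [IsTopologicalGroup A] [IsTopologicalGroup B] [IsTopologicalGroup C] [T1Space C]
    (hfin : (H.slice₃ : Set C).Finite) : DiscreteTopology H := by
  refine H.discreteTopology_of_finite_inter (U := {1} ×ˢ {1} ×ˢ univ) ?_
    ((hfin.image fun c => ((1 : A), (1 : B), c)).subset ?_)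
  · exact ((isOpen_discrete _).prod ((isOpen_discrete _).prod isOpen_univ)).mem_nhds
      ⟨rfl, rfl, trivial⟩
  · rintro ⟨a, b, c⟩ ⟨⟨rfl, rfl, -⟩, hx⟩
    exact ⟨c, mem_slice₃.mpr hx, rfl⟩

end Subgroup

section PruferProd

variable {p k d : ℕ} {T : Subgroup Circle}

variable (p k) in
/-- `C_{p^∞} × C_d × T` inside `G_{p,k} = C_{p^∞} × C_k × 𝕋`. -/
noncomputable def prodCircleRoots (d : ℕ) (T : Subgroup Circle) :
    Subgroup (Prufer p × circleRoots k × Circle) :=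
  (⊤ : Subgroup (Prufer p)).prod (((circleRoots d).comap (circleRoots k).subtype).prod T)

lemma mem_prodCircleRoots {x : Prufer p × circleRoots k × Circle} :
    x ∈ prodCircleRoots p k d T ↔ (x.2.1 : Circle) ^ d = 1 ∧ x.2.2 ∈ T := by
  simp only [prodCircleRoots, Subgroup.mem_prod, Subgroup.mem_top, true_and, Subgroup.mem_comap]
  rfl

lemma isClosed_prodCircleRoots (hT : IsClosed (T : Set Circle)) :
    IsClosed (prodCircleRoots p k d T : Set (Prufer p × circleRoots k × Circle)) :=
  isClosed_univ.prod (((isClosed_circleRoots d).preimage continuous_subtype_val).prod hT)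

lemma infinite_prodCircleRoots (hp : 1 < p) :
    (prodCircleRoots p k d T : Set (Prufer p × circleRoots k × Circle)).Infinite := by
  have := Prufer.infinite hp
  exact infinite_of_injective_forall_mem (f := fun a : Prufer p => (a, 1, 1))
    (fun a b h => congrArg Prod.fst h) fun a => mem_prodCircleRoots.mpr ⟨by simp, T.one_mem⟩

lemma discreteTopology_prodCircleRoots [NeZero k] (hT : (T : Set Circle).Finite) :
    DiscreteTopology (prodCircleRoots p k d T) :=
  discreteTopology_of_finite_slice₃ (hT.subset fun _ hz => (mem_prodCircleRoots.mp hz).2)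

lemma range_powMonoidHom_le_slice₁ {H : Subgroup (Prufer p × circleRoots k × Circle)}
    (h₃ : H.slice₃ = ⊤)
    (hH : Prod.fst '' (H : Set (Prufer p × circleRoots k × Circle)) = univ) :
    (powMonoidHom k).range ≤ H.slice₁ := by
  rintro _ ⟨a, rfl⟩
  obtain ⟨⟨a, c, z⟩, hx, rfl⟩ := hH.symm ▸ mem_univ a
  have hc : c ^ k = 1 := Subtype.ext c.2
  have hz : (z ^ k)⁻¹ ∈ H.slice₃ := h₃ ▸ mem_top _
  have hpow :
      (a, c, z) ^ k * (1, 1, (z ^ k)⁻¹) = (a ^ k, (1 : circleRoots k), (1 : Circle)) := by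
    ext <;> simp [hc]
  rw [powMonoidHom_apply, mem_slice₁, ← hpow]
  exact H.mul_mem (H.pow_mem hx k) hz

lemma exists_eq_prodCircleRoots_of_not_discreteTopology [NeZero k] (hp : p.Prime)
    {H : Subgroup (Prufer p × circleRoots k × Circle)}
    (hc : IsClosed (H : Set (Prufer p × circleRoots k × Circle)))
    (hH : Prod.fst '' (H : Set (Prufer p × circleRoots k × Circle)) = univ)
    (hnd : ¬DiscreteTopology H) : ∃ d, 0 < d ∧ d ∣ k ∧ H = prodCircleRoots p k d ⊤ := by
  have h₃ : H.slice₃ = ⊤ :=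
    Circle.subgroup_eq_top_of_isClosed_of_infinite (isClosed_slice₃ hc)
      fun hfin => hnd (discreteTopology_of_finite_slice₃ hfin)
  have h₁ : H.slice₁ = ⊤ := Prufer.eq_top_of_infinite hp
    ((Prufer.infinite_range_powMonoidHom hp.one_lt k).mono (range_powMonoidHom_le_slice₁ h₃ hH))
  obtain ⟨d, hd, hdk, h₂⟩ := H.slice₂.exists_dvd_eq_comap_circleRoots
  refine ⟨d, hd, hdk, (eq_prod_slice₂ h₁ h₃).trans ?_⟩
  rw [h₂, prodCircleRoots]

instance Nat.neZero_factorial (m : ℕ) : NeZero m.factorial := ⟨m.factorial_ne_zero⟩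

-- Every torsion point of `𝕋` lies in `C_{m!}` for all large `m`.
lemma tendsto_prodCircleRoots_factorial {H : ChabautySpace (Prufer p × circleRoots k × Circle)}
    (hH : H.1 = prodCircleRoots p k d ⊤) :
    Tendsto (α := ℕ) (β := ChabautySpace (Prufer p × circleRoots k × Circle))
      (fun m => ⟨prodCircleRoots p k d (circleRoots m.factorial),
        isClosed_prodCircleRoots (isClosed_circleRoots _)⟩) atTop (𝓝 H) := by
  refine ChabautySpace.tendsto_nhds_iff.mpr ⟨fun K _ hK => Eventually.of_forall fun m => ?_, ?_⟩
  · exact subset_empty_iff.mp (hK ▸ inter_subset_inter_left K fun x hx =>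
      hH ▸ mem_prodCircleRoots.mpr ⟨(mem_prodCircleRoots.mp hx).1, mem_top _⟩)
  · rintro U hU ⟨x, hx, hxU⟩
    rw [SetLike.mem_coe, hH] at hx
    let ι : Circle → Prufer p × circleRoots k × Circle := fun z => (x.1, x.2.1, z)
    have hι : Continuous ι := continuous_const.prodMk (continuous_const.prodMk continuous_id)
    obtain ⟨w, hw, hwU⟩ :=
      Circle.dense_torsion.exists_mem_open (hU.preimage hι) ⟨x.2.2, hxU⟩
    filter_upwards [eventually_ge_atTop (orderOf w)] with m hm
    refine ⟨ι w, mem_prodCircleRoots.mpr ⟨(mem_prodCircleRoots.mp hx).1, ?_⟩, hwU⟩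
    exact orderOf_dvd_iff_pow_eq_one.mp (Nat.dvd_factorial hw.orderOf_pos hm)

end PruferProd

/-- In `C(G_{p,k})` for `G_{p,k} = C_{p^∞} × C_k × 𝕋`, the closure of the set `C^dis` of
infinite discrete closed subgroups is the union of `C^dis` with the `d(k)` subgroups
`C_{p^∞} × C_d × 𝕋`, for `d` ranging over the positive divisors of `k` (here `C_d ≤ C_k`
is the subgroup of `d`-th roots of unity). -/
theorem chabauty_closure_of_infinite_discrete (p k : ℕ) (hp : p.Prime) (hk : 1 ≤ k) :
    closure {H : ChabautySpace (Prufer p × ↥(circleRoots k) × Circle) |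
        (H.1 : Set (Prufer p × ↥(circleRoots k) × Circle)).Infinite ∧
        DiscreteTopology H.1} =
      {H : ChabautySpace (Prufer p × ↥(circleRoots k) × Circle) |
        (H.1 : Set (Prufer p × ↥(circleRoots k) × Circle)).Infinite ∧
        DiscreteTopology H.1} ∪
      {H : ChabautySpace (Prufer p × ↥(circleRoots k) × Circle) |
        ∃ d : ℕ, 0 < d ∧ d ∣ k ∧
          H.1 = (⊤ : Subgroup (Prufer p)).prod
            (((circleRoots d).comap (circleRoots k).subtype).prod (⊤ : Subgroup Circle))} := by
  have : NeZero k := ⟨by omega⟩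
  refine Subset.antisymm (fun H hH => or_iff_not_imp_left.mpr fun hHdis => ?_) ?_
  · have hfst : Prod.fst '' (H.1 : Set (Prufer p × circleRoots k × Circle)) = univ :=
      ChabautySpace.image_fst_eq_univ_of_mem_closure
        (fun D hD => Prufer.image_fst_eq_univ_of_discreteTopology hp D.2 hD.1 hD.2) hH
    have hinf : (H.1 : Set (Prufer p × circleRoots k × Circle)).Infinite := fun hfin =>
      (Prufer.infinite hp.one_lt).not_finite (finite_univ_iff.mp (hfst ▸ hfin.image _))
    exact exists_eq_prodCircleRoots_of_not_discreteTopology hp H.2 hfst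
      fun hd => hHdis ⟨hinf, hd⟩
  · rintro H (hH | ⟨d, -, -, hH⟩)
    · exact subset_closure hH
    · exact mem_closure_of_tendsto (tendsto_prodCircleRoots_factorial hH) (Eventually.of_forall
        fun m => ⟨infinite_prodCircleRoots hp.one_lt,
          discreteTopology_prodCircleRoots (Set.finite_coe_iff.mp finite_circleRoots_s19)⟩)
end
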